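/- arXiv:math/0407536 — 3 statements merged into one kernel-verified Lean document; each statement's English description precedes it below -/
import Mathlib

section
/- Let G be a group that is m-boundedly simple, i.e., for every nontrivial g ∈ G, every element of G can be written as a product of at most m elements each of which is conjugate to g or to g⁻¹. Then every pseudocharacter on G is identically zero. (Hence G admits no nontrivial pseudocharacters.) -/
/-!
A pseudocharacter is constant on conjugacy classes: `f (c g c⁻¹) - f g` is bounded uniformly
in `g`, and replacing `g` by `gⁿ` multiplies this difference by `n`. If `x ≠ 1`, bounded
simplicity writes every power `xⁿ` as a product of at most `m` conjugates of `x` or `x⁻¹`, so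
the quasimorphism inequality bounds `|f (xⁿ)| = n |f x|` independently of `n`, forcing `f x = 0`.
-/

/-- A function `F : G → ℝ` is a quasicharacter if there is a constant `C ≥ 0` with
`|F(xy) − F(x) − F(y)| ≤ C` for all `x, y`. -/
def IsQuasicharacter {G : Type*} [Group G] (F : G → ℝ) : Prop :=
  ∃ C : ℝ, 0 ≤ C ∧ ∀ x y : G, |F (x * y) - F x - F y| ≤ C

/-- A pseudocharacter is a quasicharacter satisfying `f(gⁿ) = n·f(g)` for all integers `n`. -/
def IsPseudocharacter {G : Type*} [Group G] (f : G → ℝ) : Prop :=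
  IsQuasicharacter f ∧ ∀ (g : G) (n : ℤ), f (g ^ n) = n * f g

/-- A group `G` is `m`-boundedly simple if for every nontrivial `g`, every element of `G`
is a product of at most `m` elements, each conjugate to `g` or to `g⁻¹`. -/
def IsBoundedlySimple {G : Type*} [Group G] (m : ℕ) : Prop :=
  ∀ g : G, g ≠ 1 → ∀ x : G, ∃ L : List G,
    L.length ≤ m ∧ (∀ h ∈ L, IsConj g h ∨ IsConj g⁻¹ h) ∧ L.prod = x

lemma eq_zero_of_forall_nat_mul_abs_le {a B : ℝ} (h : ∀ n : ℕ, n * |a| ≤ B) : a = 0 := by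
  by_contra ha
  obtain ⟨n, hn⟩ := exists_nat_gt (B / |a|)
  rw [div_lt_iff₀ (abs_pos.mpr ha)] at hn
  linarith [h n]

section Quasicharacter

variable {G : Type*} [Group G] {f : G → ℝ}

lemma IsQuasicharacter.exists_abs_map_list_prod_le (hf : IsQuasicharacter f) :
    ∃ C : ℝ, 0 ≤ C ∧ ∀ (b : ℝ) (L : List G), (∀ a ∈ L, |f a| ≤ b) →
      |f L.prod| ≤ L.length * (b + C) + C := by
  obtain ⟨C, hC0, hC⟩ := hf
  refine ⟨C, hC0, fun b L hL => ?_⟩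
  induction L with
  | nil => simpa using hC 1 1
  | cons a t ih =>
    have hmul := abs_le.mp (hC a t.prod)
    have ha := abs_le.mp (hL a List.mem_cons_self)
    have ht := abs_le.mp (ih fun x hx => hL x (List.mem_cons_of_mem a hx))
    rw [List.prod_cons, List.length_cons, Nat.cast_succ]
    exact abs_le.mpr ⟨by nlinarith, by nlinarith⟩

lemma IsQuasicharacter.exists_abs_map_conj_sub_le (hf : IsQuasicharacter f) :
    ∃ D : ℝ, ∀ c y : G, |f (c * y * c⁻¹) - f y| ≤ D := by
  obtain ⟨C, -, hC⟩ := hf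
  refine ⟨4 * C, fun c y => abs_le.mpr ?_⟩
  have h₁ := abs_le.mp (hC (c * y) c⁻¹)
  have h₂ := abs_le.mp (hC c y)
  have h₃ := abs_le.mp (hC c c⁻¹)
  have h₄ := abs_le.mp (hC 1 1)
  simp only [mul_inv_cancel, one_mul] at h₃ h₄
  constructor <;> linarith

end Quasicharacter

namespace IsPseudocharacter

variable {G : Type*} [Group G] {f : G → ℝ}

lemma map_one (hf : IsPseudocharacter f) : f 1 = 0 := by
  simpa using hf.2 1 0

lemma map_inv (hf : IsPseudocharacter f) (g : G) : f g⁻¹ = -f g := by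
  simpa using hf.2 g (-1)

lemma map_pow (hf : IsPseudocharacter f) (g : G) (n : ℕ) : f (g ^ n) = n * f g := by
  simpa using hf.2 g n

lemma abs_map_pow (hf : IsPseudocharacter f) (g : G) (n : ℕ) : |f (g ^ n)| = n * |f g| := by
  rw [hf.map_pow, abs_mul, Nat.abs_cast]

lemma map_eq_of_isConj (hf : IsPseudocharacter f) {g h : G} (hgh : IsConj g h) :
    f h = f g := by
  obtain ⟨D, hD⟩ := hf.1.exists_abs_map_conj_sub_le
  obtain ⟨c, rfl⟩ := isConj_iff.mp hgh
  refine sub_eq_zero.mp (eq_zero_of_forall_nat_mul_abs_le (B := D) fun n => ?_)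
  have hn := hD c (g ^ n)
  rwa [← conj_pow, hf.map_pow, hf.map_pow, ← mul_sub, abs_mul, Nat.abs_cast] at hn

lemma abs_map_eq_of_isConj_or_isConj_inv (hf : IsPseudocharacter f) {g h : G}
    (hgh : IsConj g h ∨ IsConj g⁻¹ h) : |f h| = |f g| := by
  rcases hgh with hgh | hgh
  · rw [hf.map_eq_of_isConj hgh]
  · rw [hf.map_eq_of_isConj hgh, hf.map_inv, abs_neg]

end IsPseudocharacter

/-- If `G` is `m`-boundedly simple, then every pseudocharacter on `G` is identically zero. -/
theorem boundedly_simple_pseudocharacter_trivial {G : Type*} [Group G] (m : ℕ)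
    (hG : IsBoundedlySimple (G := G) m) (f : G → ℝ) (hf : IsPseudocharacter f) :
    ∀ x : G, f x = 0 := by
  intro x
  rcases eq_or_ne x 1 with rfl | hx
  · exact hf.map_one
  obtain ⟨C, hC0, hC⟩ := hf.1.exists_abs_map_list_prod_le
  refine eq_zero_of_forall_nat_mul_abs_le (B := m * (|f x| + C) + C) fun n => ?_
  obtain ⟨L, hLm, hLconj, hLx⟩ := hG x hx (x ^ n)
  have hbound := hC |f x| L fun a ha => (hf.abs_map_eq_of_isConj_or_isConj_inv (hLconj a ha)).le
  rw [hLx, hf.abs_map_pow] at hbound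
  have hLm' : (L.length : ℝ) ≤ m := by exact_mod_cast hLm
  nlinarith [abs_nonneg (f x)]
end

section
/- Let f : G → ℝ be a pseudocharacter on a group G with defect constant C, and suppose f is constant on conjugacy classes. If x ∈ G can be written as x = g₁ ⋯ g_k with k ≤ m, where each gᵢ is conjugate to g or to g⁻¹ for some fixed g ∈ G, then |f(x)| ≤ (m − 1)·C + m·|f(g)|. -/
/-- If `f` is a pseudocharacter with defect constant `C` which is constant on conjugacy
classes, and `x = g₁ ⋯ g_k` with `1 ≤ k ≤ m` where each `gᵢ` is conjugate to `g` or `g⁻¹`,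
then `|f(x)| ≤ (m − 1)·C + m·|f(g)|`. -/
theorem pseudocharacter_bound_of_product_of_conjugates {G : Type*} [Group G]
    (f : G → ℝ) (C : ℝ) (hC : 0 ≤ C)
    (hquasi : ∀ x y : G, |f (x * y) - f x - f y| ≤ C)
    (hhom : ∀ (g : G) (n : ℤ), f (g ^ n) = n * f g)
    (hconj : ∀ x g : G, f (g * x * g⁻¹) = f x)
    (m : ℕ) (g x : G) (L : List G) (hne : L ≠ [])
    (hlen : L.length ≤ m) (hmem : ∀ h ∈ L, IsConj g h ∨ IsConj g⁻¹ h)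
    (hprod : L.prod = x) :
    |f x| ≤ (m - 1 : ℝ) * C + m * |f g| := by
  have fginv : f g⁻¹ = -f g := by
    have := hhom g (-1)
    simpa using this
  have hconj' : ∀ a h : G, IsConj a h → f h = f a := by
    intro a h hc
    obtain ⟨c, hc⟩ := hc
    have he : (c : G) * a * (c : G)⁻¹ = h := by
      rw [mul_inv_eq_iff_eq_mul]; exact hc
    rw [← he, hconj]
  have habs : ∀ h ∈ L, |f h| = |f g| := by
    intro h hh
    rcases hmem h hh with hc | hc
    · rw [hconj' g h hc]
    · rw [hconj' g⁻¹ h hc, fginv, abs_neg]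
  have key : ∀ (M : List G), M ≠ [] → (∀ h ∈ M, |f h| = |f g|) →
      |f M.prod| ≤ ((M.length : ℝ) - 1) * C + M.length * |f g| := by
    intro M
    induction M with
    | nil => intro h; exact absurd rfl h
    | cons a t ih =>
      intro _ hm
      cases t with
      | nil => simp [hm a (by simp)]
      | cons b t' =>
        have h1 := ih (by simp) (fun h hh => hm h (List.mem_cons_of_mem a hh))
        have h2 := hquasi a (b :: t').prod
        rw [List.prod_cons]
        have ha := hm a (by simp)
        have h3 : |f (a * (b :: t').prod)| ≤ C + |f a| + |f (b :: t').prod| := by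
          have := abs_add_le (f (a * (b :: t').prod) - f a - f (b :: t').prod)
            (f a + f (b :: t').prod)
          have h4 := abs_add_le (f a) (f (b :: t').prod)
          calc |f (a * (b :: t').prod)|
              = |(f (a * (b :: t').prod) - f a - f (b :: t').prod)
                  + (f a + f (b :: t').prod)| := by ring_nf
            _ ≤ _ := this
            _ ≤ C + |f a| + |f (b :: t').prod| := by linarith
        have hg : (0:ℝ) ≤ |f g| := abs_nonneg _
        have hlenc : ((a :: b :: t').length : ℝ) = ((b :: t').length : ℝ) + 1 := by
          simp [List.length_cons]
        rw [hlenc]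
        rw [ha] at h3
        linarith
  have hk := key L hne habs
  rw [hprod] at hk
  have h1 : 1 ≤ L.length := List.length_pos_iff.mpr hne
  have h1' : (1:ℝ) ≤ (L.length : ℝ) := by exact_mod_cast h1
  have hm' : (L.length : ℝ) ≤ (m : ℝ) := by exact_mod_cast hlen
  have hg : (0:ℝ) ≤ |f g| := abs_nonneg _
  nlinarith
end

section
/- Let G be a group that is m-boundedly simple, and let f : G → ℝ be a pseudocharacter on G with defect constant C. Then f is bounded on G: for any fixed nontrivial g ∈ G, one has |f(x)| ≤ (m − 1)·C + m·|f(g)| for all x ∈ G. -/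
lemma pc_one {G : Type*} [Group G] (f : G → ℝ)
    (hhom : ∀ (g : G) (n : ℤ), f (g ^ n) = n * f g) : f 1 = 0 := by
  have := hhom 1 0
  simpa using this

lemma pc_inv {G : Type*} [Group G] (f : G → ℝ)
    (hhom : ∀ (g : G) (n : ℤ), f (g ^ n) = n * f g) (g : G) : f g⁻¹ = -f g := by
  have := hhom g (-1)
  simpa using this

lemma pc_conj {G : Type*} [Group G] (f : G → ℝ) (C : ℝ)
    (hquasi : ∀ x y : G, |f (x * y) - f x - f y| ≤ C)
    (hhom : ∀ (g : G) (n : ℤ), f (g ^ n) = n * f g) (a x : G) :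
    f (a * x * a⁻¹) = f x := by
  have h2C : ∀ y : G, |f (a * y * a⁻¹) - f y| ≤ 2 * C := by
    intro y
    have h1 := hquasi (a * y) a⁻¹
    have h2 := hquasi a y
    have hinv := pc_inv f hhom a
    calc |f (a * y * a⁻¹) - f y|
        = |(f (a * y * a⁻¹) - f (a * y) - f a⁻¹) + (f (a * y) - f a - f y) + (f a⁻¹ + f a)| := by
          ring_nf
      _ ≤ |f (a * y * a⁻¹) - f (a * y) - f a⁻¹| + |f (a * y) - f a - f y| + |f a⁻¹ + f a| := by
          exact (abs_add_le _ _).trans (by gcongr; exact abs_add_le _ _)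
      _ ≤ C + C + 0 := add_le_add (add_le_add h1 h2) (by simp [hinv])
      _ = 2 * C := by ring
  have key : ∀ n : ℤ, (n : ℝ) * |f (a * x * a⁻¹) - f x| ≤ 2 * C := by
    intro n
    have hc : (a * x * a⁻¹) ^ n = a * x ^ n * a⁻¹ := by
      have := map_zpow (MulAut.conj a) x n
      simpa [MulAut.conj_apply] using this
    have := h2C (x ^ n)
    rw [← hc, hhom, hhom] at this
    calc (n : ℝ) * |f (a * x * a⁻¹) - f x| ≤ |(n : ℝ)| * |f (a * x * a⁻¹) - f x| := by
          gcongr ?_ * _; exact le_abs_self _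
      _ = |(n : ℝ) * f (a * x * a⁻¹) - (n : ℝ) * f x| := by rw [← abs_mul]; ring_nf
      _ ≤ 2 * C := this
  by_contra hne
  have hpos : 0 < |f (a * x * a⁻¹) - f x| := abs_pos.mpr (sub_ne_zero.mpr hne)
  obtain ⟨n, hn⟩ := exists_nat_gt (2 * C / |f (a * x * a⁻¹) - f x|)
  have := key n
  rw [div_lt_iff₀ hpos] at hn
  push_cast at this
  linarith

/-- If `G` is `m`-boundedly simple and `f` is a pseudocharacter with defect constant `C`,
then for every nontrivial `g`, `|f(x)| ≤ (m − 1)·C + m·|f(g)|` for all `x`. -/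
theorem pseudocharacter_bounded_of_boundedly_simple {G : Type*} [Group G] (m : ℕ)
    (hG : IsBoundedlySimple (G := G) m) (f : G → ℝ) (C : ℝ) (hC : 0 ≤ C)
    (hquasi : ∀ x y : G, |f (x * y) - f x - f y| ≤ C)
    (hhom : ∀ (g : G) (n : ℤ), f (g ^ n) = n * f g) :
    ∀ g : G, g ≠ 1 → ∀ x : G, |f x| ≤ (m - 1 : ℝ) * C + m * |f g| := by
  intro g hg x
  obtain ⟨L, hlen, hmem, hprod⟩ := hG g hg x
  -- every element of L has |f h| = |f g|
  have hB : ∀ h ∈ L, |f h| = |f g| := by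
    intro h hh
    rcases hmem h hh with hc | hc
    · obtain ⟨c, hc'⟩ := isConj_iff.mp hc
      rw [← hc', pc_conj f C hquasi hhom]
    · obtain ⟨c, hc'⟩ := isConj_iff.mp hc
      rw [← hc', pc_conj f C hquasi hhom, pc_inv f hhom, abs_neg]
  rcases eq_or_ne m 0 with rfl | hm
  · exfalso
    obtain ⟨L', hlen', _, hprod'⟩ := hG g hg g
    have : L' = [] := List.length_eq_zero_iff.mp (Nat.le_zero.mp hlen')
    rw [this] at hprod'
    exact hg hprod'.symm
  have hm1 : (1 : ℝ) ≤ m := by exact_mod_cast Nat.one_le_iff_ne_zero.mpr hm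
  rcases L with _ | ⟨h, L⟩
  · simp only [List.prod_nil] at hprod
    rw [← hprod, pc_one f hhom, abs_zero]
    have : (0:ℝ) ≤ |f g| := abs_nonneg _
    nlinarith
  · -- nonempty list induction
    have key : ∀ (T : List G) (h : G), (∀ y ∈ h :: T, |f y| = |f g|) →
        |f ((h :: T).prod)| ≤ ((h :: T).length - 1 : ℝ) * C + (h :: T).length * |f g| := by
      intro T
      induction T with
      | nil => intro h hmem'; simp [hmem' h (by simp)]
      | cons h2 T ih =>
        intro h hmem'
        have ihh := ih h2 (fun y hy => hmem' y (List.mem_cons_of_mem _ hy))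
        have hq := hquasi h (h2 :: T).prod
        have hfh : |f h| = |f g| := hmem' h (by simp)
        have step : |f ((h :: h2 :: T).prod)| ≤ C + |f h| + |f ((h2 :: T).prod)| := by
          have : (h :: h2 :: T).prod = h * (h2 :: T).prod := by simp
          rw [this]
          calc |f (h * (h2 :: T).prod)|
              = |(f (h * (h2 :: T).prod) - f h - f (h2 :: T).prod) + f h + f (h2 :: T).prod| := by
                ring_nf
            _ ≤ |f (h * (h2 :: T).prod) - f h - f (h2 :: T).prod| + |f h| + |f (h2 :: T).prod| :=
                (abs_add_le _ _).trans (by gcongr; exact abs_add_le _ _)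
            _ ≤ C + |f h| + |f (h2 :: T).prod| := by gcongr
        have hlen2 : ((h :: h2 :: T).length : ℝ) = ((h2 :: T).length : ℝ) + 1 := by
          push_cast [List.length_cons]; ring
        rw [hlen2]
        calc |f ((h :: h2 :: T).prod)| ≤ C + |f h| + |f ((h2 :: T).prod)| := step
          _ ≤ C + |f g| + (((h2 :: T).length - 1 : ℝ) * C + (h2 :: T).length * |f g|) := by
              rw [hfh]; gcongr
          _ = ((h2 :: T).length + 1 - 1 : ℝ) * C + ((h2 :: T).length + 1) * |f g| := by ring
    have := key L h (fun y hy => hB y hy)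
    rw [hprod] at this
    refine this.trans ?_
    have hlenR : ((h :: L).length : ℝ) ≤ m := by exact_mod_cast hlen
    have h1 : (1 : ℝ) ≤ (h :: L).length := by
      have : 1 ≤ (h :: L).length := by simp
      exact_mod_cast this
    have hfgnn : (0:ℝ) ≤ |f g| := abs_nonneg _
    nlinarith
end
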